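/- Let F : E → C be a strict symmetric monoidal functor between symmetric monoidal categories, and let F = H∘G be a factorisation of the underlying functor in which G : E → D is bijective on objects and H : D → C is fully faithful. Then there is a unique symmetric monoidal structure on D making both G and H strict symmetric monoidal functors. -/

import Mathlib

open CategoryTheory MonoidalCategory

universe v₁ v₂ v₃ u₁ u₂ u₃

/-- A functor between symmetric monoidal categories is strict symmetric monoidal when it
preserves the tensor and unit *on the nose*, and preserves the tensor of morphisms and
all the coherence constraints (associators, unitors and the symmetry) up to the
resulting equalities of objects. -/
structure IsStrictSymmetricMonoidal {E : Type u₁} {D : Type u₂}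
    [Category.{v₁} E] [Category.{v₂} D]
    [MonoidalCategory E] [MonoidalCategory D]
    [SymmetricCategory E] [SymmetricCategory D] (F : E ⥤ D) : Prop where
  unit_obj : F.obj (𝟙_ E) = 𝟙_ D
  tensor_obj : ∀ X Y : E, F.obj (X ⊗ Y) = F.obj X ⊗ F.obj Y
  tensor_map : ∀ {X Y X' Y' : E} (f : X ⟶ X') (g : Y ⟶ Y'),
    F.map (f ⊗ₘ g) =
      eqToHom (tensor_obj X Y) ≫ (F.map f ⊗ₘ F.map g) ≫ eqToHom (tensor_obj X' Y').symm
  assoc_map : ∀ X Y Z : E,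
    F.map (α_ X Y Z).hom =
      eqToHom ((tensor_obj (X ⊗ Y) Z).trans
          (congrArg (fun W => W ⊗ F.obj Z) (tensor_obj X Y))) ≫
        (α_ (F.obj X) (F.obj Y) (F.obj Z)).hom ≫
        eqToHom ((tensor_obj X (Y ⊗ Z)).trans
          (congrArg (fun W => F.obj X ⊗ W) (tensor_obj Y Z))).symm
  lunit_map : ∀ X : E,
    F.map (λ_ X).hom =
      eqToHom ((tensor_obj (𝟙_ E) X).trans
          (congrArg (fun W => W ⊗ F.obj X) unit_obj)) ≫ (λ_ (F.obj X)).hom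
  runit_map : ∀ X : E,
    F.map (ρ_ X).hom =
      eqToHom ((tensor_obj X (𝟙_ E)).trans
          (congrArg (fun W => F.obj X ⊗ W) unit_obj)) ≫ (ρ_ (F.obj X)).hom
  braiding_map : ∀ X Y : E,
    F.map (β_ X Y).hom =
      eqToHom (tensor_obj X Y) ≫ (β_ (F.obj X) (F.obj Y)).hom ≫
        eqToHom (tensor_obj Y X).symm

/-- A symmetric monoidal structure on a category `D`: a monoidal structure together with
a symmetry. -/
structure SMStruct (D : Type u₂) [Category.{v₂} D] : Type max u₂ v₂ where
  M : MonoidalCategory D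
  S : @SymmetricCategory D _ M

set_option maxHeartbeats 1000000
set_option maxRecDepth 10000

theorem braiding_congr {C : Type u₃} [Category.{v₃} C] [MonoidalCategory C] [BraidedCategory C]
    {A A' B B' : C} (p : A = A') (q : B = B') :
    (β_ A B).hom = eqToHom (congr_arg₂ tensorObj p q) ≫ (β_ A' B').hom ≫
      eqToHom (congr_arg₂ tensorObj q p).symm := by
  subst p; subst q; simp


theorem tensor_eqToHom' {C : Type u₃} [Category.{v₃} C] [MonoidalCategory C]
    {X X' Y Y' : C} (p : X = X') (q : Y = Y') :
    (eqToHom p ⊗ₘ eqToHom q : X ⊗ Y ⟶ X' ⊗ Y') = eqToHom (congr_arg₂ tensorObj p q) := by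
  subst p; subst q; simp

theorem associator_congr {C : Type u₃} [Category.{v₃} C] [MonoidalCategory C]
    {A A' B B' X X' : C} (p : A = A') (q : B = B') (r : X = X') :
    (α_ A B X).hom = eqToHom (by rw [p, q, r]) ≫ (α_ A' B' X').hom ≫ eqToHom (by rw [p, q, r]) := by
  subst p; subst q; subst r; simp

theorem leftUnitor_congr {C : Type u₃} [Category.{v₃} C] [MonoidalCategory C]
    {A A' : C} (p : A = A') :
    (λ_ A).hom = eqToHom (by rw [p]) ≫ (λ_ A').hom ≫ eqToHom p.symm := by
  subst p; simp

theorem rightUnitor_congr {C : Type u₃} [Category.{v₃} C] [MonoidalCategory C]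
    {A A' : C} (p : A = A') :
    (ρ_ A).hom = eqToHom (by rw [p]) ≫ (ρ_ A').hom ≫ eqToHom p.symm := by
  subst p; simp

theorem smstruct_ext_aux {D : Type u₂} [Category.{v₂} D]
    (M₁ M₂ : MonoidalCategory D)
    (B₁ : @SymmetricCategory D _ M₁) (B₂ : @SymmetricCategory D _ M₂)
    (ht : ∀ X Y : D, M₁.tensorObj X Y = M₂.tensorObj X Y)
    (hu : M₁.tensorUnit = M₂.tensorUnit)
    (hth : ∀ {X₁ Y₁ X₂ Y₂ : D} (f : X₁ ⟶ Y₁) (g : X₂ ⟶ Y₂)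
      (p : M₁.tensorObj X₁ X₂ = M₂.tensorObj X₁ X₂)
      (q : M₂.tensorObj Y₁ Y₂ = M₁.tensorObj Y₁ Y₂),
      M₁.tensorHom f g = eqToHom p ≫ M₂.tensorHom f g ≫ eqToHom q)
    (ha : ∀ (X Y Z : D)
      (p : M₁.tensorObj (M₁.tensorObj X Y) Z = M₂.tensorObj (M₂.tensorObj X Y) Z)
      (q : M₂.tensorObj X (M₂.tensorObj Y Z) = M₁.tensorObj X (M₁.tensorObj Y Z)),
      (M₁.associator X Y Z).hom = eqToHom p ≫ (M₂.associator X Y Z).hom ≫ eqToHom q)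
    (hl : ∀ (X : D) (p : M₁.tensorObj M₁.tensorUnit X = M₂.tensorObj M₂.tensorUnit X),
      (M₁.leftUnitor X).hom = eqToHom p ≫ (M₂.leftUnitor X).hom)
    (hr : ∀ (X : D) (p : M₁.tensorObj X M₁.tensorUnit = M₂.tensorObj X M₂.tensorUnit),
      (M₁.rightUnitor X).hom = eqToHom p ≫ (M₂.rightUnitor X).hom)
    (hb : ∀ (X Y : D) (p : M₁.tensorObj X Y = M₂.tensorObj X Y)
      (q : M₂.tensorObj Y X = M₁.tensorObj Y X),
      (B₁.braiding X Y).hom = eqToHom p ≫ (B₂.braiding X Y).hom ≫ eqToHom q) :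
    M₁ = M₂ ∧ HEq B₁ B₂ := by
  have hwl : ∀ (X : D) {Y₁ Y₂ : D} (f : Y₁ ⟶ Y₂)
      (p : M₁.tensorObj X Y₁ = M₂.tensorObj X Y₁)
      (q : M₂.tensorObj X Y₂ = M₁.tensorObj X Y₂),
      M₁.whiskerLeft X f = eqToHom p ≫ M₂.whiskerLeft X f ≫ eqToHom q := by
    intro X Y₁ Y₂ f p q
    rw [← @id_tensorHom D _ M₁, ← @id_tensorHom D _ M₂]
    exact hth _ _ _ _
  have hwr : ∀ {X₁ X₂ : D} (f : X₁ ⟶ X₂) (Y : D)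
      (p : M₁.tensorObj X₁ Y = M₂.tensorObj X₁ Y)
      (q : M₂.tensorObj X₂ Y = M₁.tensorObj X₂ Y),
      M₁.whiskerRight f Y = eqToHom p ≫ M₂.whiskerRight f Y ≫ eqToHom q := by
    intro X₁ X₂ f Y p q
    rw [← @tensorHom_id D _ M₁, ← @tensorHom_id D _ M₂]
    exact hth _ _ _ _
  obtain ⟨q1, q2, q3, q4, q5, q6, q7, q8, q9, q10⟩ := M₁
  rename_i s₁
  obtain ⟨w1, w2, w3, w4, w5, w6, w7, w8, w9, w10⟩ := M₂
  rename_i s₂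
  obtain ⟨t₁, wl₁, wr₁, th₁, u₁, a₁, l₁, r₁⟩ := s₁
  obtain ⟨t₂, wl₂, wr₂, th₂, u₂, a₂, l₂, r₂⟩ := s₂
  unfold_projs at *
  have htt : t₁ = t₂ := funext fun X => funext fun Y => ht X Y
  subst htt
  subst hu
  have : @th₁ = @th₂ := by
    funext X₁ Y₁ X₂ Y₂ f g
    simpa using hth f g rfl rfl
  subst this
  have : @wl₁ = @wl₂ := by
    funext X Y₁ Y₂ f
    simpa using hwl X f rfl rfl
  subst this
  have : @wr₁ = @wr₂ := by
    funext X₁ X₂ f Y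
    simpa using hwr f Y rfl rfl
  subst this
  have : a₁ = a₂ := by
    funext X Y Z
    apply Iso.ext
    simpa using ha X Y Z rfl rfl
  subst this
  have : l₁ = l₂ := by
    funext X
    apply Iso.ext
    simpa using hl X rfl
  subst this
  have : r₁ = r₂ := by
    funext X
    apply Iso.ext
    simpa using hr X rfl
  subst this
  refine ⟨rfl, ?_⟩
  obtain ⟨sy₁⟩ := B₁
  rename_i bc₁
  obtain ⟨sy₂⟩ := B₂
  rename_i bc₂
  obtain ⟨b₁, _, _, _, _⟩ := bc₁
  obtain ⟨b₂, _, _, _, _⟩ := bc₂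
  have : b₁ = b₂ := by
    funext X Y
    apply Iso.ext
    have h := hb X Y rfl rfl; simp only [eqToHom_refl, Category.id_comp, Category.comp_id] at h; exact h
  subst this
  rfl

section Construction
variable {E : Type u₁} {C : Type u₃} {D : Type u₂}
    [Category.{v₁} E] [Category.{v₃} C] [Category.{v₂} D]
    [MonoidalCategory E] [SymmetricCategory E]
    [MonoidalCategory C] [SymmetricCategory C]
    (G : E ⥤ D) (hG : Function.Bijective G.obj)
    (H : D ⥤ C) [H.Full] [H.Faithful]

@[simps, reducible] noncomputable def myStruct
    (hobj : ∀ X Y : D,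
      H.obj (G.obj ((Equiv.ofBijective G.obj hG).symm X ⊗ (Equiv.ofBijective G.obj hG).symm Y))
        = H.obj X ⊗ H.obj Y)
    (hun : H.obj (G.obj (𝟙_ E)) = 𝟙_ C) :
    MonoidalCategoryStruct D where
  tensorObj X Y := G.obj ((Equiv.ofBijective G.obj hG).symm X ⊗ (Equiv.ofBijective G.obj hG).symm Y)
  tensorUnit := G.obj (𝟙_ E)
  whiskerLeft X _ _ f := H.preimage (eqToHom (hobj X _) ≫ (H.obj X ◁ H.map f) ≫ eqToHom (hobj X _).symm)
  whiskerRight f Y := H.preimage (eqToHom (hobj _ Y) ≫ (H.map f ▷ H.obj Y) ≫ eqToHom (hobj _ Y).symm)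
  tensorHom f g := H.preimage (eqToHom (hobj _ _) ≫ (H.map f ⊗ₘ H.map g) ≫ eqToHom (hobj _ _).symm)
  associator X Y Z := H.preimageIso
    (eqToIso ((hobj _ Z).trans (congrArg (· ⊗ H.obj Z) (hobj X Y))) ≪≫ α_ _ _ _ ≪≫
      (eqToIso ((hobj X _).trans (congrArg (H.obj X ⊗ ·) (hobj Y Z)))).symm)
  leftUnitor X := H.preimageIso
    (eqToIso ((hobj _ X).trans (congrArg (· ⊗ H.obj X) hun)) ≪≫ λ_ (H.obj X))
  rightUnitor X := H.preimageIso
    (eqToIso ((hobj X _).trans (congrArg (H.obj X ⊗ ·) hun)) ≪≫ ρ_ (H.obj X))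

variable (hobj : ∀ X Y : D,
      H.obj (G.obj ((Equiv.ofBijective G.obj hG).symm X ⊗ (Equiv.ofBijective G.obj hG).symm Y))
        = H.obj X ⊗ H.obj Y)
    (hun : H.obj (G.obj (𝟙_ E)) = 𝟙_ C)

noncomputable def myData :
    letI := myStruct G hG H hobj hun
    Monoidal.InducingFunctorData H :=
  letI := myStruct G hG H hobj hun
  { μIso := fun X Y => eqToIso (hobj X Y).symm
    εIso := eqToIso hun.symm
    whiskerLeft_eq := fun X Y₁ Y₂ f => by simp [eqToIso]
    whiskerRight_eq := fun f Y => by simp [eqToIso]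
    tensorHom_eq := fun f g => by simp [eqToIso]
    associator_eq := fun X Y Z => by simp [eqToIso]
    leftUnitor_eq := fun X => by simp [eqToIso]
    rightUnitor_eq := fun X => by simp [eqToIso] }

@[reducible] noncomputable def myMonoidal : MonoidalCategory D :=
  letI := myStruct G hG H hobj hun
  Monoidal.induced H (myData G hG H hobj hun)

section Lemmas

@[simp] lemma myMonoidal_toStruct :
    (myMonoidal G hG H hobj hun).toMonoidalCategoryStruct = myStruct G hG H hobj hun := rfl

@[reducible] noncomputable def myBraided : @BraidedCategory D _ (myMonoidal G hG H hobj hun) :=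
  @BraidedCategory.mk D _ (myMonoidal G hG H hobj hun)
    (fun X Y => H.preimageIso
      (eqToIso (hobj X Y) ≪≫ β_ (H.obj X) (H.obj Y) ≪≫ eqToIso (hobj Y X).symm))
    (fun X Y Z f => H.map_injective (by
      simp [eqToIso, myMonoidal_toStruct G hG H hobj hun]))
    (fun f Z => H.map_injective (by
      simp [eqToIso, myMonoidal_toStruct G hG H hobj hun]))
    (fun X Y Z => H.map_injective (by
      simp only [Functor.map_comp, myMonoidal_toStruct G hG H hobj hun, eqToIso,
        myStruct_whiskerLeft, myStruct_whiskerRight, myStruct_associator, myStruct_tensorObj,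
        Functor.preimageIso_hom, Functor.map_preimage,
        Iso.trans_hom, Iso.symm_hom, eqToIso.hom, eqToIso.inv,
        Category.assoc, eqToHom_trans_assoc, eqToHom_refl, Category.id_comp]
      rw [braiding_congr rfl (hobj Y Z)]
      simp [BraidedCategory.hexagon_forward]))
    (fun X Y Z => H.map_injective (by
      simp only [Functor.map_comp, myMonoidal_toStruct G hG H hobj hun, eqToIso,
        myStruct_whiskerLeft, myStruct_whiskerRight, myStruct_associator, myStruct_tensorObj,
        Functor.preimageIso_hom, Functor.preimageIso_inv, Functor.map_preimage,
        Iso.trans_hom, Iso.trans_inv, Iso.symm_hom, Iso.symm_inv, eqToIso.hom, eqToIso.inv,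
        Category.assoc, eqToHom_trans_assoc, eqToHom_refl, Category.id_comp]
      rw [braiding_congr (hobj X Y) rfl]
      simp [BraidedCategory.hexagon_reverse]))

noncomputable def mySymmetric : @SymmetricCategory D _ (myMonoidal G hG H hobj hun) :=
  @SymmetricCategory.mk D _ (myMonoidal G hG H hobj hun) (myBraided G hG H hobj hun)
    (fun X Y => H.map_injective (by
      rw [Functor.map_comp]; erw [H.map_preimage, H.map_preimage]; simp [eqToIso]))

@[simp] lemma mySymmetric_braiding (X Y : D) :
    @BraidedCategory.braiding D _ (myMonoidal G hG H hobj hun)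
        (mySymmetric G hG H hobj hun).toBraidedCategory X Y =
      H.preimageIso (eqToIso (hobj X Y) ≪≫ β_ (H.obj X) (H.obj Y) ≪≫ eqToIso (hobj Y X).symm) :=
  rfl

end Lemmas
end Construction


/-- Let `F : E → C` be a strict symmetric monoidal functor between symmetric monoidal
categories, and let `F = G ⋙ H` with `G` bijective on objects and `H` fully faithful.
Then there is a unique symmetric monoidal structure on `D` making both `G` and `H`
strict symmetric monoidal. -/
theorem unique_symmetric_monoidal_structure_on_bo_ff_factorisation
    {E : Type u₁} {C : Type u₃} {D : Type u₂}
    [Category.{v₁} E] [Category.{v₃} C] [Category.{v₂} D]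
    [MonoidalCategory E] [SymmetricCategory E]
    [MonoidalCategory C] [SymmetricCategory C]
    (F : E ⥤ C) (hF : IsStrictSymmetricMonoidal F)
    (G : E ⥤ D) (H : D ⥤ C) (hGH : G ⋙ H = F)
    (hG : Function.Bijective G.obj) (hH_full : H.Full) (hH_faithful : H.Faithful) :
    ∃! S : SMStruct D,
      @IsStrictSymmetricMonoidal E D _ _ _ S.M _ S.S G ∧
      @IsStrictSymmetricMonoidal D C _ _ S.M _ S.S _ H := by

  haveI := hH_full
  haveI := hH_faithful
  have hHG : ∀ a : E, H.obj (G.obj a) = F.obj a := fun a => Functor.congr_obj hGH a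
  have hgs : ∀ X : D, G.obj ((Equiv.ofBijective G.obj hG).symm X) = X := fun X =>
    (Equiv.ofBijective G.obj hG).apply_symm_apply X
  have hsy : ∀ a : E, (Equiv.ofBijective G.obj hG).symm (G.obj a) = a := fun a =>
    (Equiv.ofBijective G.obj hG).symm_apply_apply a
  have hFH : ∀ X : D, F.obj ((Equiv.ofBijective G.obj hG).symm X) = H.obj X := fun X => by
    rw [← hHG, hgs]
  have hobj : ∀ X Y : D,
      H.obj (G.obj ((Equiv.ofBijective G.obj hG).symm X ⊗ (Equiv.ofBijective G.obj hG).symm Y))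
        = H.obj X ⊗ H.obj Y := fun X Y => by
    rw [hHG, hF.tensor_obj, hFH, hFH]
  have hun : H.obj (G.obj (𝟙_ E)) = 𝟙_ C := by rw [hHG, hF.unit_obj]
  have hHGm : ∀ {a b : E} (f : a ⟶ b),
      H.map (G.map f) = eqToHom (hHG a) ≫ F.map f ≫ eqToHom (hHG b).symm := by
    intro a b f
    have := Functor.congr_hom hGH f
    simpa using this
  have hHs : @IsStrictSymmetricMonoidal D C _ _ (myMonoidal G hG H hobj hun) _
      (mySymmetric G hG H hobj hun) _ H := by
    letI := myMonoidal G hG H hobj hun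
    letI := mySymmetric G hG H hobj hun
    refine ⟨hun, hobj, ?_, ?_, ?_, ?_, ?_⟩ <;> intros <;>
      simp only [myMonoidal_toStruct G hG H hobj hun, myStruct_tensorHom, myStruct_associator,
        myStruct_leftUnitor, myStruct_rightUnitor,
        mySymmetric_braiding G hG H hobj hun,
        Functor.preimageIso_hom, Functor.map_preimage,
        Iso.trans_hom, Iso.symm_hom, eqToIso.hom, eqToIso.inv, Category.assoc]
  have hGs : @IsStrictSymmetricMonoidal E D _ _ _ (myMonoidal G hG H hobj hun) _
      (mySymmetric G hG H hobj hun) G := by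
    letI := myMonoidal G hG H hobj hun
    letI := mySymmetric G hG H hobj hun
    have tob : ∀ X Y : E, G.obj (X ⊗ Y) =
        G.obj ((Equiv.ofBijective G.obj hG).symm (G.obj X) ⊗
          (Equiv.ofBijective G.obj hG).symm (G.obj Y)) := fun X Y =>
      congrArg G.obj (by rw [hsy, hsy])
    refine ⟨rfl, tob, ?_, ?_, ?_, ?_, ?_⟩
    · intro X Y X' Y' f g
      apply H.map_injective
      rw [hHGm, hF.tensor_map, Functor.map_comp, Functor.map_comp,
        hHs.tensor_map (G.map f) (G.map g), eqToHom_map, eqToHom_map, hHGm, hHGm]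
      simp [← tensorHom_comp_tensorHom, tensor_eqToHom']
    · intro X Y Z
      apply H.map_injective
      rw [hHGm, hF.assoc_map, Functor.map_comp, Functor.map_comp,
        hHs.assoc_map (G.obj X) (G.obj Y) (G.obj Z), eqToHom_map, eqToHom_map,
        associator_congr (hHG X) (hHG Y) (hHG Z)]
      simp
    · intro X
      apply H.map_injective
      rw [hHGm, hF.lunit_map, Functor.map_comp,
        hHs.lunit_map (G.obj X), eqToHom_map,
        leftUnitor_congr (hHG X)]
      simp
    · intro X
      apply H.map_injective
      rw [hHGm, hF.runit_map, Functor.map_comp,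
        hHs.runit_map (G.obj X), eqToHom_map,
        rightUnitor_congr (hHG X)]
      simp
    · intro X Y
      apply H.map_injective
      rw [hHGm, hF.braiding_map, Functor.map_comp, Functor.map_comp,
        hHs.braiding_map (G.obj X) (G.obj Y), eqToHom_map, eqToHom_map,
        braiding_congr (hHG X) (hHG Y)]
      simp
  refine ⟨⟨myMonoidal G hG H hobj hun, mySymmetric G hG H hobj hun⟩, ⟨hGs, hHs⟩, ?_⟩
  rintro ⟨M, B⟩ ⟨hGs', hHs'⟩
  have ht : ∀ X Y : D, M.tensorObj X Y = (myMonoidal G hG H hobj hun).tensorObj X Y := by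
    intro X Y
    conv_lhs => rw [← hgs X, ← hgs Y]
    exact (@IsStrictSymmetricMonoidal.tensor_obj E D _ _ _ M _ B G hGs' _ _).symm
  have main := smstruct_ext_aux M (myMonoidal G hG H hobj hun) B (mySymmetric G hG H hobj hun)
    ht (@IsStrictSymmetricMonoidal.unit_obj E D _ _ _ M _ B G hGs').symm
    (fun {X₁ Y₁ X₂ Y₂} f g p q => H.map_injective (by
      rw [@IsStrictSymmetricMonoidal.tensor_map D C _ _ M _ B _ H hHs' X₁ X₂ Y₁ Y₂ f g, Functor.map_comp, Functor.map_comp, eqToHom_map, eqToHom_map,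
        @IsStrictSymmetricMonoidal.tensor_map D C _ _ (myMonoidal G hG H hobj hun) _ (mySymmetric G hG H hobj hun) _ H hHs X₁ X₂ Y₁ Y₂ f g]
      simp))
    (fun X Y Z p q => H.map_injective (by
      rw [@IsStrictSymmetricMonoidal.assoc_map D C _ _ M _ B _ H hHs' X Y Z, Functor.map_comp, Functor.map_comp, eqToHom_map, eqToHom_map,
        @IsStrictSymmetricMonoidal.assoc_map D C _ _ (myMonoidal G hG H hobj hun) _ (mySymmetric G hG H hobj hun) _ H hHs X Y Z]
      simp))
    (fun X p => H.map_injective (by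
      rw [@IsStrictSymmetricMonoidal.lunit_map D C _ _ M _ B _ H hHs' X, Functor.map_comp, eqToHom_map, @IsStrictSymmetricMonoidal.lunit_map D C _ _ (myMonoidal G hG H hobj hun) _ (mySymmetric G hG H hobj hun) _ H hHs X]
      simp))
    (fun X p => H.map_injective (by
      rw [@IsStrictSymmetricMonoidal.runit_map D C _ _ M _ B _ H hHs' X, Functor.map_comp, eqToHom_map, @IsStrictSymmetricMonoidal.runit_map D C _ _ (myMonoidal G hG H hobj hun) _ (mySymmetric G hG H hobj hun) _ H hHs X]
      simp))
    (fun X Y p q => H.map_injective (by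
      rw [@IsStrictSymmetricMonoidal.braiding_map D C _ _ M _ B _ H hHs' X Y, Functor.map_comp, Functor.map_comp, eqToHom_map, eqToHom_map,
        @IsStrictSymmetricMonoidal.braiding_map D C _ _ (myMonoidal G hG H hobj hun) _ (mySymmetric G hG H hobj hun) _ H hHs X Y]
      simp))
  obtain ⟨h1, h2⟩ := main
  subst h1
  rw [eq_of_heq h2]
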